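/- Suppose E[|X_1|] < ∞. Then for any game ν on N, with the convention X_{0:n} := 0, E[Y_ν] = Σ_{∅ ≠ T ⊆ N} ( ν(T)/C(n,|T|) ) · E[ X_{n−|T|+1:n} − X_{n−|T|:n} ], where C(a,b) denotes the binomial coefficient. -/

import Mathlib

open MeasureTheory ProbabilityTheory Finset

noncomputable section

namespace ChoquetPaper

variable {n : ℕ} {Ω : Type*}

/-- `ν_i^σ := ν({σ(1),…,σ(i)})` (here `i : ℕ`, `0 ≤ i ≤ n`). -/
def nuSig (ν : Finset (Fin n) → ℝ) (σ : Equiv.Perm (Fin n)) (i : ℕ) : ℝ :=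
  ν ((Finset.univ.filter (fun j : Fin n => (j : ℕ) < i)).image σ)

/-- The Choquet sum `Σ_{i=1}^n p_i^{ν,σ} x_{σ(i)}` w.r.t. a fixed permutation `σ`. -/
def choquetPerm (ν : Finset (Fin n) → ℝ) (σ : Equiv.Perm (Fin n)) (x : Fin n → ℝ) : ℝ :=
  ∑ i : Fin n, (nuSig ν σ ((i : ℕ) + 1) - nuSig ν σ (i : ℕ)) * x (σ i)

/-- A permutation `σ` such that `x_{σ(1)} ≥ ⋯ ≥ x_{σ(n)}`. -/
def sortDesc (x : Fin n → ℝ) : Equiv.Perm (Fin n) :=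
  (Fin.revPerm).trans (Tuple.sort x)

/-- The discrete Choquet integral `C_ν(x)`. -/
def choquet (ν : Finset (Fin n) → ℝ) (x : Fin n → ℝ) : ℝ :=
  choquetPerm ν (sortDesc x) x

/-- The `i`-th order statistic `X_{i:n}` (1-based), with the convention `X_{0:n} := 0`. -/
def orderStat (X : Fin n → Ω → ℝ) (i : ℕ) (ω : Ω) : ℝ :=
  if h : i - 1 < n ∧ 1 ≤ i then X (Tuple.sort (fun j => X j ω) ⟨i - 1, h.1⟩) ω else 0

/-- `Y_ν^σ := Σ_{i=1}^n p_i^{ν,σ} X_{n−i+1:n}`. -/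
def Ysig (ν : Finset (Fin n) → ℝ) (σ : Equiv.Perm (Fin n)) (X : Fin n → Ω → ℝ) (ω : Ω) : ℝ :=
  ∑ i : Fin n, (nuSig ν σ ((i : ℕ) + 1) - nuSig ν σ (i : ℕ)) * orderStat X (n - (i : ℕ)) ω

/-- plus truncated power function -/
def tpowPos (t : ℝ) (m : ℕ) : ℝ := if 0 < t then t ^ m else 0

/-- minus truncated power function -/
def tpowNeg (t : ℝ) (m : ℕ) : ℝ := if t < 0 then t ^ m else 0

/-- divided difference at pairwise distinct points indexed by a finite set -/
def ddiff {ι : Type*} [DecidableEq ι] (g : ℝ → ℝ) (s : Finset ι) (a : ι → ℝ) : ℝ :=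
  ∑ i ∈ s, g (a i) / ∏ j ∈ s.erase i, (a i - a j)

/-!
Summation by parts turns `C_ν(x)` into `∑ₖ ν(Aₖ(x)) (x_{n-k+1:n} - x_{n-k:n})`, where
`Aₖ(x) = topSet x k` is the set of indices of the `k` largest coordinates of `x`. An i.i.d.
sample with an atomless law is exchangeable and almost surely has no ties, and relabelling its
coordinates by a permutation `τ` moves `Aₖ` to `τ⁻¹ Aₖ` while fixing every order statistic. As
permutations act transitively on the `k`-subsets of `N`, `E[1{Aₖ(X) = T} g(X)]` does not depend
on `T` for symmetric `g`, so it is `E[g(X)] / C(n,k)`.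
-/

open Function

theorem sortDesc_apply (x : Fin n → ℝ) (i : Fin n) : sortDesc x i = Tuple.sort x i.rev := rfl

-- Injectivity is needed: `Tuple.sort` breaks ties by index, which relabelling does not respect.
theorem sort_comp_perm {x : Fin n → ℝ} (hx : Injective x) (τ : Equiv.Perm (Fin n)) :
    Tuple.sort (x ∘ τ) = τ⁻¹ * Tuple.sort x := by
  refine (Tuple.eq_sort_iff.2 ⟨?_, fun i j hij hxij => ?_⟩).symm
  · convert Tuple.monotone_sort x using 1
    ext i
    simp
  · simp only [Equiv.Perm.coe_mul, Equiv.Perm.coe_inv, comp_apply, Equiv.apply_symm_apply] at hxij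
    exact absurd ((Tuple.sort x).injective (hx hxij)) hij.ne

theorem orderStat_zero (X : Fin n → Ω → ℝ) (ω : Ω) : orderStat X 0 ω = 0 := by
  simp [orderStat]

theorem orderStat_succ_self (X : Fin n → Ω → ℝ) (ω : Ω) : orderStat X (n + 1) ω = 0 := by
  simp [orderStat]

theorem apply_sortDesc (x : Fin n → ℝ) (i : Fin n) :
    x (sortDesc x i) = orderStat eval (n - i) x := by
  have hi := i.isLt
  rw [orderStat, dif_pos ⟨by omega, by omega⟩, sortDesc_apply]
  congr 3

theorem orderStat_eval_comp_perm (x : Fin n → ℝ) (τ : Equiv.Perm (Fin n)) (m : ℕ) :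
    orderStat eval m (x ∘ τ) = orderStat eval m x := by
  unfold orderStat
  split_ifs
  exacts [congrFun Tuple.comp_perm_comp_sort_eq_comp_sort _, rfl]

def spacing (k : ℕ) (x : Fin n → ℝ) : ℝ :=
  orderStat eval (n - k + 1) x - orderStat eval (n - k) x

theorem spacing_comp_perm (k : ℕ) (x : Fin n → ℝ) (τ : Equiv.Perm (Fin n)) :
    spacing k (x ∘ τ) = spacing k x := by
  simp only [spacing, orderStat_eval_comp_perm]

def topSet (x : Fin n → ℝ) (k : ℕ) : Finset (Fin n) :=
  (univ.filter fun j : Fin n => (j : ℕ) < k).image (sortDesc x)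

theorem nuSig_sortDesc (ν : Finset (Fin n) → ℝ) (x : Fin n → ℝ) (k : ℕ) :
    nuSig ν (sortDesc x) k = ν (topSet x k) := rfl

theorem card_topSet (x : Fin n → ℝ) {k : ℕ} (hk : k ≤ n) : #(topSet x k) = k := by
  rw [topSet, card_image_of_injective _ (sortDesc x).injective]
  simp [Fin.card_filter_val_lt, hk]

theorem topSet_comp_perm {x : Fin n → ℝ} (hx : Injective x) (τ : Equiv.Perm (Fin n))
    (k : ℕ) :
    topSet (x ∘ τ) k = (topSet x k).image ⇑τ⁻¹ := by
  simp only [topSet, image_image]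
  congr 1
  ext i
  simp [sortDesc_apply, sort_comp_perm hx]

theorem sum_range_sub_mul_eq_sum_mul_sub {R : Type*} [CommRing R] (m : ℕ) (a c : ℕ → R)
    (hc₀ : c 0 = 0) (hc : c (m + 1) = 0) :
    ∑ i ∈ range m, (a (i + 1) - a i) * c (m - i)
      = ∑ k ∈ range (m + 1), a k * (c (m - k + 1) - c (m - k)) := by
  simp only [mul_sub, sub_mul, sum_sub_distrib]
  rw [sum_range_succ', sum_range_succ _ m]
  simp only [hc₀, hc, Nat.sub_zero, Nat.sub_self, mul_zero, add_zero]
  congr 1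
  refine sum_congr rfl fun i hi => ?_
  rw [Nat.sub_add_eq, Nat.sub_add_cancel (Nat.sub_pos_of_lt (mem_range.1 hi))]

theorem choquet_eq_sum_topSet_mul_spacing (ν : Finset (Fin n) → ℝ) (x : Fin n → ℝ) :
    choquet ν x = ∑ k ∈ range (n + 1), ν (topSet x k) * spacing k x := by
  simp only [choquet, choquetPerm, nuSig_sortDesc, apply_sortDesc]
  rw [Fin.sum_univ_eq_sum_range
    (fun i => (ν (topSet x (i + 1)) - ν (topSet x i)) * orderStat eval (n - i) x) n]
  exact sum_range_sub_mul_eq_sum_mul_sub n (fun k => ν (topSet x k))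
    (fun m => orderStat eval m x) (orderStat_zero _ x) (orderStat_succ_self _ x)

theorem choquet_eq_sum_ite_topSet (ν : Finset (Fin n) → ℝ) (x : Fin n → ℝ) :
    choquet ν x = ∑ T, ν T * (if topSet x #T = T then spacing #T x else 0) := by
  rw [choquet_eq_sum_topSet_mul_spacing, ← powerset_univ, sum_powerset, card_univ,
    Fintype.card_fin]
  refine sum_congr rfl fun k hk => ?_
  have hmem : topSet x k ∈ powersetCard k univ :=
    mem_powersetCard_univ.2 (card_topSet x (Nat.lt_succ_iff.1 (mem_range.1 hk)))
  rw [← sum_ite_eq_of_mem' _ _ (fun T => ν T * spacing k x) hmem]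
  refine sum_congr rfl fun T hT => ?_
  rw [mem_powersetCard_univ.1 hT, mul_ite, mul_zero]
  exact if_congr eq_comm rfl rfl

instance {α : Type*} : MeasurableSpace (Equiv.Perm α) := ⊤

instance {α : Type*} : DiscreteMeasurableSpace (Equiv.Perm α) := ⟨fun _ => trivial⟩

theorem measurable_sort : Measurable (Tuple.sort : (Fin n → ℝ) → Equiv.Perm (Fin n)) := by
  refine measurable_to_countable' fun ρ => ?_
  simp_rw [Set.preimage, Set.mem_singleton_iff, eq_comm (a := Tuple.sort _), Tuple.eq_sort_iff,
    Monotone]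
  measurability

theorem measurable_of_sort {β : Type*} [MeasurableSpace β]
    {F : Equiv.Perm (Fin n) → (Fin n → ℝ) → β} (hF : ∀ ρ, Measurable (F ρ)) :
    Measurable fun x => F (Tuple.sort x) x :=
  (measurable_from_prod_countable_right (f := fun p => F p.1 p.2) hF).comp
    (measurable_sort.prodMk measurable_id)

theorem measurableSet_topSet_eq (k : ℕ) (S : Finset (Fin n)) :
    MeasurableSet {x : Fin n → ℝ | topSet x k = S} :=
  measurable_sort (DiscreteMeasurableSpace.forall_measurableSet
    {ρ | (univ.filter fun j : Fin n => (j : ℕ) < k).image (Fin.revPerm.trans ρ) = S})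

theorem measurable_orderStat_eval (m : ℕ) :
    Measurable (orderStat eval m : (Fin n → ℝ) → ℝ) := by
  unfold orderStat
  split_ifs with h
  · exact measurable_of_sort (F := fun ρ x => x (ρ ⟨m - 1, h.1⟩)) fun ρ =>
      measurable_pi_apply _
  · exact measurable_const

theorem measurable_spacing (k : ℕ) : Measurable (spacing k : (Fin n → ℝ) → ℝ) :=
  (measurable_orderStat_eval _).sub (measurable_orderStat_eval _)

theorem measurable_choquet (ν : Finset (Fin n) → ℝ) : Measurable (choquet ν) :=
  measurable_of_sort (F := fun ρ => choquetPerm ν (Fin.revPerm.trans ρ)) fun _ =>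
    Finset.measurable_sum _ fun _ _ => (measurable_pi_apply _).const_mul _

theorem exists_perm_image_eq_of_card_eq {α : Type*} [DecidableEq α] {S T : Finset α}
    (h : #S = #T) : ∃ τ : Equiv.Perm α, S.image τ = T := by
  obtain ⟨τ, hτ⟩ := (Set.powersetCard.isPretransitive (α := α) (n := #T)).exists_smul_eq
    ⟨S, h⟩ ⟨T, rfl⟩
  refine ⟨τ, ?_⟩
  simpa [Set.powersetCard.coe_smul, Finset.smul_finset_def] using congrArg Subtype.val hτ

section Exchangeable

variable {π : Measure (Fin n → ℝ)}

theorem integrable_orderStat_eval (hint : ∀ j, Integrable (fun x : Fin n → ℝ => x j) π)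
    (m : ℕ) : Integrable (orderStat eval m) π := by
  refine (integrable_finsetSum univ fun j _ => (hint j).abs).mono'
    (measurable_orderStat_eval m).aestronglyMeasurable (ae_of_all _ fun x => ?_)
  unfold orderStat
  split_ifs
  · exact single_le_sum (f := fun j => |x j|) (fun j _ => abs_nonneg _) (mem_univ _)
  · simpa using sum_nonneg fun j _ => abs_nonneg (x j)

theorem integrable_spacing (hint : ∀ j, Integrable (fun x : Fin n → ℝ => x j) π) (k : ℕ) :
    Integrable (spacing k) π :=
  (integrable_orderStat_eval hint _).sub (integrable_orderStat_eval hint _)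

theorem integrable_ite_topSet_eq {g : (Fin n → ℝ) → ℝ} (hg : Integrable g π) (k : ℕ)
    (S : Finset (Fin n)) : Integrable (fun x => if topSet x k = S then g x else 0) π := by
  refine (hg.indicator (measurableSet_topSet_eq k S)).congr (ae_of_all _ fun x => ?_)
  simp [Set.indicator_apply]

theorem integral_comp_perm
    (hexch : ∀ τ : Equiv.Perm (Fin n), MeasurePreserving (· ∘ τ) π π)
    {f : (Fin n → ℝ) → ℝ} (hf : AEStronglyMeasurable f π) (τ : Equiv.Perm (Fin n)) :
    ∫ x, f (x ∘ τ) ∂π = ∫ x, f x ∂π := by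
  rw [← integral_map (hexch τ).measurable.aemeasurable (by rwa [(hexch τ).map_eq]),
    (hexch τ).map_eq]

theorem integral_ite_topSet_image_perm
    (hexch : ∀ τ : Equiv.Perm (Fin n), MeasurePreserving (· ∘ τ) π π)
    (hinj : ∀ᵐ x ∂π, Injective x) {g : (Fin n → ℝ) → ℝ} (hg : Integrable g π)
    (hg_perm : ∀ x (τ : Equiv.Perm (Fin n)), g (x ∘ τ) = g x) (k : ℕ) (S : Finset (Fin n))
    (τ : Equiv.Perm (Fin n)) :
    ∫ x, (if topSet x k = S.image τ then g x else 0) ∂π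
      = ∫ x, (if topSet x k = S then g x else 0) ∂π := by
  conv_rhs => rw [← integral_comp_perm hexch (integrable_ite_topSet_eq hg k S).1 τ]
  refine integral_congr_ae (hinj.mono fun x hx => ?_)
  have : (topSet x k).image ⇑τ⁻¹ = S ↔ topSet x k = S.image τ := by
    generalize topSet x k = A
    constructor <;> rintro rfl <;> simp [image_image]
  simp only [hg_perm, topSet_comp_perm hx, this]

theorem integral_ite_topSet_eq_div_choose
    (hexch : ∀ τ : Equiv.Perm (Fin n), MeasurePreserving (· ∘ τ) π π)
    (hinj : ∀ᵐ x ∂π, Injective x) {g : (Fin n → ℝ) → ℝ} (hg : Integrable g π)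
    (hg_perm : ∀ x (τ : Equiv.Perm (Fin n)), g (x ∘ τ) = g x) (T : Finset (Fin n)) :
    ∫ x, (if topSet x #T = T then g x else 0) ∂π = (∫ x, g x ∂π) / n.choose #T := by
  -- The `C(n, #T)` integrals below are all equal, and they add up to `∫ g` because
  -- `topSet x #T` is always one of the sets indexing them.
  have hk : #T ≤ n := by simpa using card_le_univ T
  have hconst : ∀ S ∈ powersetCard #T univ, ∫ x, (if topSet x #T = S then g x else 0) ∂π
      = ∫ x, (if topSet x #T = T then g x else 0) ∂π := fun S hS => by
    obtain ⟨τ, hτ⟩ := exists_perm_image_eq_of_card_eq (mem_powersetCard_univ.1 hS)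
    rw [← hτ, integral_ite_topSet_image_perm hexch hinj hg hg_perm]
  have hsum : ∑ S ∈ powersetCard #T univ, ∫ x, (if topSet x #T = S then g x else 0) ∂π
      = ∫ x, g x ∂π := by
    rw [← integral_finsetSum _ fun S _ => integrable_ite_topSet_eq hg _ S]
    refine integral_congr_ae (ae_of_all _ fun x => ?_)
    exact sum_ite_eq_of_mem _ _ _ (mem_powersetCard_univ.2 (card_topSet x hk))
  rw [sum_congr rfl hconst, sum_const, card_powersetCard, card_univ, Fintype.card_fin,
    nsmul_eq_mul] at hsum
  rw [← hsum, mul_div_cancel_left₀]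
  exact_mod_cast (Nat.choose_pos hk).ne'

theorem integral_choquet_of_exchangeable {ν : Finset (Fin n) → ℝ} (hν : ν ∅ = 0)
    (hexch : ∀ τ : Equiv.Perm (Fin n), MeasurePreserving (· ∘ τ) π π)
    (hinj : ∀ᵐ x ∂π, Injective x)
    (hint : ∀ j, Integrable (fun x : Fin n → ℝ => x j) π) :
    ∫ x, choquet ν x ∂π = ∑ T ∈ univ.filter (fun T : Finset (Fin n) => T ≠ ∅),
      ν T / n.choose #T * ∫ x, spacing #T x ∂π := by
  rw [sum_filter_of_ne (p := fun T => T ≠ ∅) fun T _ hT hT₀ => hT (by simp [hT₀, hν])]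
  simp_rw [choquet_eq_sum_ite_topSet]
  rw [integral_finsetSum _ fun T _ =>
    (integrable_ite_topSet_eq (integrable_spacing hint _) _ T).const_mul _]
  refine sum_congr rfl fun T _ => ?_
  rw [integral_const_mul, integral_ite_topSet_eq_div_choose hexch hinj
    (integrable_spacing hint _) (spacing_comp_perm _) T]
  ring

end Exchangeable

theorem measurePreserving_comp_perm {ι α : Type*} [Fintype ι] [MeasurableSpace α]
    (μ : Measure α) [SigmaFinite μ] (τ : Equiv.Perm ι) :
    MeasurePreserving (fun x : ι → α => x ∘ τ) (Measure.pi fun _ => μ)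
      (Measure.pi fun _ => μ) := by
  convert measurePreserving_arrowCongr' (fun _ => μ) (fun _ => μ) τ.symm
    (MeasurableEquiv.refl α) fun _ => MeasurePreserving.id μ
  ext x
  simp [MeasurableEquiv.arrowCongr', Equiv.arrowCongr']

theorem ae_injective_of_measure_eq_zero {ι α : Type*} [Countable ι] [MeasurableSpace α]
    {π : Measure (ι → α)} (h : ∀ i j, i ≠ j → π {x | x i = x j} = 0) :
    ∀ᵐ x ∂π, Injective x := by
  have : ∀ᵐ x ∂π, ∀ i j, i ≠ j → x i ≠ x j := by
    simp only [ae_all_iff]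
    intro i j
    by_cases hij : i = j
    · simp [hij]
    · simpa [hij, ae_iff] using h i j hij
  filter_upwards [this] with x hx i j
  exact not_imp_not.1 (hx i j)

theorem map_eq_pi_of_iIndepFun {ι β : Type*} [Fintype ι] [MeasurableSpace Ω]
    [MeasurableSpace β]
    {P : Measure Ω} [IsProbabilityMeasure P] {X : ι → Ω → β} (hX : ∀ i, Measurable (X i))
    (hindep : iIndepFun X P) {μ : Measure β} (hdist : ∀ i, P.map (X i) = μ) :
    P.map (fun ω i => X i ω) = Measure.pi fun _ => μ := by
  rw [(iIndepFun_iff_map_fun_eq_pi_map fun i => (hX i).aemeasurable).1 hindep]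
  simp_rw [hdist]

theorem measure_setOf_eq_eq_zero_of_indepFun [MeasurableSpace Ω] {P : Measure Ω}
    [IsFiniteMeasure P] {X Y : Ω → ℝ} (hX : Measurable X) (hY : Measurable Y)
    (h : IndepFun X Y P) [NullSingletonClass (P.map Y)] : P {ω | X ω = Y ω} = 0 := by
  have hdiag : MeasurableSet {p : ℝ × ℝ | p.1 = p.2} := measurableSet_diagonal
  rw [show {ω | X ω = Y ω} = (fun ω => (X ω, Y ω)) ⁻¹' {p | p.1 = p.2} from rfl,
    ← Measure.map_apply (hX.prodMk hY) hdiag,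
    (indepFun_iff_map_prod_eq_prod_map_map hX.aemeasurable hY.aemeasurable).1 h,
    Measure.prod_apply hdiag]
  simp [Set.preimage]

theorem ae_injective_map_of_iIndepFun {ι : Type*} [Countable ι] [MeasurableSpace Ω]
    {P : Measure Ω} [IsProbabilityMeasure P] {X : ι → Ω → ℝ} (hX : ∀ i, Measurable (X i))
    (hindep : iIndepFun X P) [∀ i, NullSingletonClass (P.map (X i))] :
    ∀ᵐ x ∂(P.map fun ω i => X i ω), Injective x := by
  refine ae_injective_of_measure_eq_zero fun i j hij => ?_
  rw [Measure.map_apply (measurable_pi_lambda _ hX)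
    (measurableSet_eq_fun (measurable_pi_apply i) (measurable_pi_apply j))]
  exact measure_setOf_eq_eq_zero_of_indepFun (hX i) (hX j) (hindep.indepFun hij)

theorem statement5_general {Ω : Type*} [MeasurableSpace Ω] {n : ℕ} (hn : 0 < n)
    (P : Measure Ω) [IsProbabilityMeasure P]
    (ν : Finset (Fin n) → ℝ) (hν0 : ν ∅ = 0)
    (X : Fin n → Ω → ℝ) (hmeas : ∀ i, Measurable (X i))
    (hindep : iIndepFun X P)
    (μ : Measure ℝ) (hac : μ ≪ volume) (hdist : ∀ i, Measure.map (X i) P = μ)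
    (hint : Integrable (X ⟨0, hn⟩) P) :
    ∫ ω, choquet ν (fun i => X i ω) ∂P
      = ∑ T ∈ Finset.univ.filter (fun T : Finset (Fin n) => T ≠ ∅),
          (ν T / (Nat.choose n T.card : ℝ)) *
            ∫ ω, (orderStat X (n - T.card + 1) ω - orderStat X (n - T.card) ω) ∂P := by
  have hvec : Measurable fun ω i => X i ω := measurable_pi_lambda _ hmeas
  have : IsProbabilityMeasure μ :=
    hdist ⟨0, hn⟩ ▸ Measure.isProbabilityMeasure_map (hmeas _).aemeasurable
  have (i : Fin n) : NullSingletonClass (P.map (X i)) :=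
    hdist i ▸ ⟨fun a => hac (measure_singleton a)⟩
  have hexch (τ : Equiv.Perm (Fin n)) :
      MeasurePreserving (· ∘ τ) (P.map fun ω i => X i ω) (P.map fun ω i => X i ω) :=
    map_eq_pi_of_iIndepFun hmeas hindep hdist ▸ measurePreserving_comp_perm μ τ
  have hcoord (j : Fin n) :
      Integrable (fun x : Fin n → ℝ => x j) (P.map fun ω i => X i ω) := by
    rw [integrable_map_measure (measurable_pi_apply j).aestronglyMeasurable hvec.aemeasurable]
    exact (IdentDistrib.mk (hmeas _).aemeasurable (hmeas j).aemeasurable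
      (by rw [hdist, hdist])).integrable_iff.1 hint
  rw [← integral_map hvec.aemeasurable (measurable_choquet ν).aestronglyMeasurable,
    integral_choquet_of_exchangeable hν0 hexch (ae_injective_map_of_iIndepFun hmeas hindep) hcoord]
  simp_rw [integral_map hvec.aemeasurable (measurable_spacing _).aestronglyMeasurable]
  rfl

/-- `E[Y_ν] = Σ_{∅ ≠ T ⊆ N} (ν(T)/C(n,|T|)) E[X_{n−|T|+1:n} − X_{n−|T|:n}]`. -/
theorem statement5 {Ω : Type*} [MeasurableSpace Ω] {n : ℕ} (hn : 0 < n)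
    (P : Measure Ω) [IsProbabilityMeasure P]
    (ν : Finset (Fin n) → ℝ) (hν0 : ν ∅ = 0) (hν01 : ∀ T, ν T ∈ Set.Icc (0:ℝ) 1)
    (X : Fin n → Ω → ℝ) (hmeas : ∀ i, Measurable (X i))
    (hindep : iIndepFun X P)
    (μ : Measure ℝ) (hac : μ ≪ volume) (hdist : ∀ i, Measure.map (X i) P = μ)
    (hint : Integrable (X ⟨0, hn⟩) P) :
    ∫ ω, choquet ν (fun i => X i ω) ∂P
      = ∑ T ∈ Finset.univ.filter (fun T : Finset (Fin n) => T ≠ ∅),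
          (ν T / (Nat.choose n T.card : ℝ)) *
            ∫ ω, (orderStat X (n - T.card + 1) ω - orderStat X (n - T.card) ω) ∂P :=
  statement5_general hn P ν hν0 X hmeas hindep μ hac hdist hint

end ChoquetPaper
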